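/- Let L ⊂ ℝⁿ be a lattice and T : L → ℤ a nontrivial linear map. Then L has a basis w₁,…,wₙ that is rigid with respect to T, i.e., T(w₁) = T(w₂) = ⋯ = T(wₙ), and this common value generates the image of T. -/

import Mathlib

/-!
Write `T = t • φ` with `t` a generator of the image of `T`, so that `φ : L → ℤ` is surjective.
A preimage `x` of `1` under `φ`, followed by a basis of the (free) kernel of `φ`, is a basis `u`
of `L`. If `g` is the functional sending every `u i` to `1`, the transvection
`z ↦ z + (g z - φ z) • x` is an automorphism of `L` with `φ ∘ τ = g`, so the basis `τ ∘ u` is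
rigid for `φ`, hence for `T`, with common value `t`.
-/

open Module

section

variable {R M : Type*} [CommRing R] [AddCommGroup M] [Module R M]

theorem exists_linearEquiv_comp_eq {φ g : M →ₗ[R] R} {x : M} (hφ : φ x = 1) (hg : g x = 1) :
    ∃ τ : M ≃ₗ[R] M, φ ∘ₗ τ.toLinearMap = g := by
  have hx : (g - φ) x = 0 := by simp [hφ, hg]
  refine ⟨LinearEquiv.transvection hx, LinearMap.ext fun z => ?_⟩
  simp [LinearMap.transvection.apply, hφ]

variable [IsDomain R]

theorem LinearMap.exists_surjective_eq_mul {T : M →ₗ[R] R} {t : R}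
    (ht : LinearMap.range T = R ∙ t) (ht0 : t ≠ 0) :
    ∃ φ : M →ₗ[R] R, Function.Surjective φ ∧ ∀ z, T z = φ z * t := by
  let e := LinearEquiv.toSpanNonzeroSingleton R R t ht0
  let T' : M →ₗ[R] R ∙ t := T.codRestrict _ fun z => by rw [← ht]; exact T.mem_range_self z
  refine ⟨e.symm.toLinearMap ∘ₗ T', e.symm.surjective.comp fun y => ?_, fun z => ?_⟩
  · obtain ⟨z, hz⟩ : (y : R) ∈ LinearMap.range T := ht.symm ▸ y.2
    exact ⟨z, Subtype.ext hz⟩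
  · calc T z = (e (e.symm (T' z)) : R) := by simp [T']
      _ = e.symm (T' z) * t := congrArg Subtype.val (LinearEquiv.toSpanNonzeroSingleton_apply ..)

variable [IsPrincipalIdealRing R] {ι : Type*} [Finite ι]

theorem exists_basis_zero_eq_of_apply_eq_one (b : Basis ι R M) {φ : M →ₗ[R] R} {x : M}
    (hx : φ x = 1) : ∃ (m : ℕ) (u : Basis (Fin (m + 1)) R M), u 0 = x := by
  obtain ⟨m, c⟩ := Submodule.basisOfPid b (LinearMap.ker φ)
  refine ⟨m, Basis.mkFinCons x c (fun r k hk h => ?_) (fun z => ⟨-φ z, ?_⟩), by simp⟩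
  · simpa [hx, LinearMap.mem_ker.mp hk] using congrArg φ h
  · simp [hx]

theorem exists_basis_forall_apply_eq_one (b : Basis ι R M) {φ : M →ₗ[R] R}
    (hφ : Function.Surjective φ) : ∃ w : Basis ι R M, ∀ i, φ (w i) = 1 := by
  obtain ⟨x, hx⟩ := hφ 1
  obtain ⟨m, u, rfl⟩ := exists_basis_zero_eq_of_apply_eq_one b hx
  let g : M →ₗ[R] R := u.constr R fun _ => 1
  obtain ⟨τ, hτ⟩ := exists_linearEquiv_comp_eq hx (u.constr_basis R _ 0 : g (u 0) = 1)
  refine ⟨(u.map τ).reindex (u.indexEquiv b), fun i => ?_⟩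
  rw [Basis.reindex_apply, Basis.map_apply, ← LinearEquiv.coe_coe, ← LinearMap.comp_apply, hτ]
  exact u.constr_basis R _ _

end

theorem stmt_19 (n : ℕ) (L : Submodule ℤ (Fin n → ℝ))
    (b : Module.Basis (Fin n) ℤ L) (T : L →ₗ[ℤ] ℤ) (hT : T ≠ 0) :
    ∃ (w : Module.Basis (Fin n) ℤ L) (t : ℤ),
      (∀ i, T (w i) = t) ∧ LinearMap.range T = Submodule.span ℤ {t} := by
  obtain ⟨t, ht⟩ := Submodule.IsPrincipal.principal (LinearMap.range T)
  have ht0 : t ≠ 0 := by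
    rintro rfl
    exact hT (LinearMap.range_eq_bot.mp (by simpa using ht))
  obtain ⟨φ, hφ, hTφ⟩ := T.exists_surjective_eq_mul ht ht0
  obtain ⟨w, hw⟩ := exists_basis_forall_apply_eq_one b hφ
  exact ⟨w, t, fun i => by rw [hTφ, hw, one_mul], ht⟩
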